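/- arXiv:0707.2248 — 3 statements merged into one kernel-verified Lean document; each statement's English description precedes it below -/
import Mathlib

section
/- The element Y = Q^{-1/2} J T_{w₀} of the completion of U_q(g) satisfies C_Y(E_i) = −F_{θ(i)}, C_Y(F_i) = −E_{θ(i)}, and C_Y(K_H) = K_{w₀(H)}, where C_Y denotes conjugation u ↦ Y u Y^{-1}. -/
/-- The element `Y = Q^{-1/2} J T_{w₀}` of the completion of `U_q(g)`
satisfies `C_Y(E_i) = -F_{θ(i)}`, `C_Y(F_i) = -E_{θ(i)}` and `C_Y(K_H) = K_{w₀(H)}`, where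
`C_Y(u) = Y u Y⁻¹`.  Here `U` is the completion (a ring), `T`, `J` and `Qinvhalf = Q^{-1/2}`
are invertible, `Q^{-1/2}` is central, and the conjugation actions of `T_{w₀}` and `J` on the
generators are as recalled in the hypotheses. -/
theorem stmt_11 {I HC : Type} (U : Type) [Ring U]
    (θ : I → I) (w0H : HC → HC) (Hc : I → HC)
    (E F : I → U) (K : HC → Uˣ)
    (T J Qinvhalf : Uˣ)
    (hQcentral : ∀ u : U, (Qinvhalf : U) * u = u * (Qinvhalf : U))
    (hTE : ∀ i, (T : U) * E i * ((T⁻¹ : Uˣ) : U) = -(F (θ i) * (K (Hc (θ i)) : U)))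
    (hTF : ∀ i, (T : U) * F i * ((T⁻¹ : Uˣ) : U) = -(((K (Hc (θ i)))⁻¹ : Uˣ) * E (θ i)))
    (hTK : ∀ c, (T : U) * (K c : U) * ((T⁻¹ : Uˣ) : U) = (K (w0H c) : U))
    (hJE : ∀ i, (J : U) * E i * ((J⁻¹ : Uˣ) : U) = (K (Hc i) : U) * E i)
    (hJF : ∀ i, (J : U) * F i * ((J⁻¹ : Uˣ) : U) = F i * (((K (Hc i))⁻¹ : Uˣ) : U))
    (hJK : ∀ c, (J : U) * (K c : U) * ((J⁻¹ : Uˣ) : U) = (K c : U)) :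
    (∀ i, ((Qinvhalf * J * T : Uˣ) : U) * E i * (((Qinvhalf * J * T)⁻¹ : Uˣ) : U)
        = -(F (θ i))) ∧
    (∀ i, ((Qinvhalf * J * T : Uˣ) : U) * F i * (((Qinvhalf * J * T)⁻¹ : Uˣ) : U)
        = -(E (θ i))) ∧
    (∀ c, ((Qinvhalf * J * T : Uˣ) : U) * (K c : U) * (((Qinvhalf * J * T)⁻¹ : Uˣ) : U)
        = (K (w0H c) : U)) := by
  have hJJ : ((J⁻¹ : Uˣ) : U) * (J : U) = 1 := by exact_mod_cast J.inv_mul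
  have hQQ : (Qinvhalf : U) * ((Qinvhalf⁻¹ : Uˣ) : U) = 1 := by exact_mod_cast Qinvhalf.mul_inv
  -- conjugation by QJT equals C_J ∘ C_T
  have hconj : ∀ u : U, ((Qinvhalf * J * T : Uˣ) : U) * u * (((Qinvhalf * J * T)⁻¹ : Uˣ) : U)
      = (J : U) * ((T : U) * u * ((T⁻¹ : Uˣ) : U)) * ((J⁻¹ : Uˣ) : U) := by
    intro u
    have : ((Qinvhalf * J * T : Uˣ) : U) * u * (((Qinvhalf * J * T)⁻¹ : Uˣ) : U)
        = (Qinvhalf : U) * ((J : U) * ((T : U) * u * ((T⁻¹ : Uˣ) : U)) * ((J⁻¹ : Uˣ) : U))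
            * ((Qinvhalf⁻¹ : Uˣ) : U) := by
      simp [mul_assoc]
    rw [this, hQcentral, mul_assoc, hQQ, mul_one]
  -- multiplicativity of conjugation by J
  have hJmul : ∀ a b : U, (J : U) * (a * b) * ((J⁻¹ : Uˣ) : U)
      = ((J : U) * a * ((J⁻¹ : Uˣ) : U)) * ((J : U) * b * ((J⁻¹ : Uˣ) : U)) := by
    intro a b
    calc (J : U) * (a * b) * ((J⁻¹ : Uˣ) : U)
        = (J : U) * a * (((J⁻¹ : Uˣ) : U) * (J : U)) * (b * ((J⁻¹ : Uˣ) : U)) := by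
          rw [hJJ]; simp [mul_assoc]
      _ = _ := by simp [mul_assoc]
  have hJKinv : ∀ c, (J : U) * (((K c)⁻¹ : Uˣ) : U) * ((J⁻¹ : Uˣ) : U) = (((K c)⁻¹ : Uˣ) : U) := by
    intro c
    have h := hJK c
    -- J * K = K * J
    have h2 : (J : U) * (K c : U) = (K c : U) * (J : U) := by
      have := congrArg (· * (J : U)) h
      simpa [mul_assoc, hJJ] using this
    have h3 : (K c : U) * ((J : U) * (((K c)⁻¹ : Uˣ) : U) * ((J⁻¹ : Uˣ) : U))
        = (K c : U) * (((K c)⁻¹ : Uˣ) : U) := by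
      have hK : (K c : U) * (((K c)⁻¹ : Uˣ) : U) = 1 := by exact_mod_cast (K c).mul_inv
      calc (K c : U) * ((J : U) * (((K c)⁻¹ : Uˣ) : U) * ((J⁻¹ : Uˣ) : U))
          = ((K c : U) * (J : U)) * (((K c)⁻¹ : Uˣ) : U) * ((J⁻¹ : Uˣ) : U) := by
            simp [mul_assoc]
        _ = ((J : U) * (K c : U)) * (((K c)⁻¹ : Uˣ) : U) * ((J⁻¹ : Uˣ) : U) := by rw [h2]
        _ = (J : U) * ((K c : U) * (((K c)⁻¹ : Uˣ) : U)) * ((J⁻¹ : Uˣ) : U) := by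
            simp [mul_assoc]
        _ = 1 := by rw [hK, mul_one]; exact_mod_cast J.mul_inv
        _ = (K c : U) * (((K c)⁻¹ : Uˣ) : U) := by exact_mod_cast ((K c).mul_inv).symm
    have hKinvK : (((K c)⁻¹ : Uˣ) : U) * (K c : U) = 1 := by exact_mod_cast (K c).inv_mul
    have := congrArg ((((K c)⁻¹ : Uˣ) : U) * ·) h3
    simpa [← mul_assoc, hKinvK] using this
  refine ⟨fun i => ?_, fun i => ?_, fun c => ?_⟩
  · rw [hconj, hTE, mul_neg, neg_mul, hJmul, hJF, hJK]
    have hKinvK : (((K (Hc (θ i)))⁻¹ : Uˣ) : U) * (K (Hc (θ i)) : U) = 1 := by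
      exact_mod_cast (K (Hc (θ i))).inv_mul
    rw [mul_assoc, hKinvK, mul_one]
  · rw [hconj, hTF, mul_neg, neg_mul, hJmul, hJKinv, hJE]
    have hKinvK : (((K (Hc (θ i)))⁻¹ : Uˣ) : U) * (K (Hc (θ i)) : U) = 1 := by
      exact_mod_cast (K (Hc (θ i))).inv_mul
    rw [← mul_assoc, hKinvK, one_mul]
  · rw [hconj, hTK, hJK]
end

section
/- Given the Kirillov–Reshetikhin/Levendorskii–Soibelman formula R = exp(h Σ_{i,j}(B^{-1})_{ij} H_i ⊗ H_j)·(T_{w₀}^{-1} ⊗ T_{w₀}^{-1})Δ(T_{w₀}) for the standard R-matrix, the unitarized R-matrix R̄ = (Q^{1/2} ⊗ Q^{1/2}) R Δ(Q^{-1/2}) equals (Y^{-1} ⊗ Y^{-1})Δ(Y), where Y = Q^{-1/2} J T_{w₀}. -/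
/-- Given the Kirillov–Reshetikhin/Levendorskii–Soibelman formula
`R = Exp · (T_{w₀}⁻¹ ⊗ T_{w₀}⁻¹) Δ(T_{w₀})` for the standard `R`-matrix (with
`Exp = exp(h Σ (B⁻¹)_{ij} H_i ⊗ H_j)`), the unitarized `R`-matrix
`R̄ = (Q^{1/2} ⊗ Q^{1/2}) R Δ(Q^{-1/2})` equals `(Y⁻¹ ⊗ Y⁻¹) Δ(Y)` where `Y = Q^{-1/2} J T_{w₀}`.
Here `U` is the completion of `U_q(g)`, `U2` the completed tensor square, `i1, i2` the two
inclusions (with commuting images), `Δ` the coproduct, `Qh = Q^{1/2}` central, and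
`Δ(J) = (J ⊗ J)·Exp`, with `Exp` commuting with `T_{w₀}⁻¹ ⊗ T_{w₀}⁻¹`. -/
theorem stmt_12 (U U2 : Type) [Ring U] [Ring U2]
    (Δ : U →+* U2) (i1 i2 : U →+* U2)
    (hcomm : ∀ a b : U, i1 a * i2 b = i2 b * i1 a)
    (T J Qh : Uˣ)
    (hQcent : ∀ u : U, (Qh : U) * u = u * (Qh : U))
    (hΔQcent : ∀ x : U2, Δ (Qh : U) * x = x * Δ (Qh : U))
    (hΔQinvcent : ∀ x : U2, Δ ((Qh⁻¹ : Uˣ) : U) * x = x * Δ ((Qh⁻¹ : Uˣ) : U))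
    (Exp : U2)
    (hΔJ : Δ (J : U) = i1 (J : U) * i2 (J : U) * Exp)
    (hTexp : (i1 ((T⁻¹ : Uˣ) : U) * i2 ((T⁻¹ : Uˣ) : U)) * Exp
        = Exp * (i1 ((T⁻¹ : Uˣ) : U) * i2 ((T⁻¹ : Uˣ) : U)))
    (R : U2)
    (hR : R = Exp * (i1 ((T⁻¹ : Uˣ) : U) * i2 ((T⁻¹ : Uˣ) : U)) * Δ (T : U)) :
    (i1 (Qh : U) * i2 (Qh : U)) * R * Δ ((Qh⁻¹ : Uˣ) : U)
      = i1 (((Qh⁻¹ * J * T)⁻¹ : Uˣ) : U) * i2 (((Qh⁻¹ * J * T)⁻¹ : Uˣ) : U) *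
          Δ ((Qh⁻¹ * J * T : Uˣ) : U) := by
  have w21 : ∀ (a b : U) (x : U2), i2 b * (i1 a * x) = i1 a * (i2 b * x) := by
    intro a b x; rw [← mul_assoc, ← hcomm, mul_assoc]
  have cQ1 : ∀ (u : U) (x : U2), i1 (Qh : U) * (i1 u * x) = i1 u * (i1 (Qh : U) * x) := by
    intro u x; rw [← mul_assoc, ← map_mul, hQcent, map_mul, mul_assoc]
  have cQ2 : ∀ (u : U) (x : U2), i2 (Qh : U) * (i2 u * x) = i2 u * (i2 (Qh : U) * x) := by
    intro u x; rw [← mul_assoc, ← map_mul, hQcent, map_mul, mul_assoc]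
  have can1 : ∀ x : U2, i1 ((J⁻¹ : Uˣ) : U) * (i1 (J : U) * x) = x := by
    intro x; rw [← mul_assoc, ← map_mul, Units.inv_mul, map_one, one_mul]
  have can2 : ∀ x : U2, i2 ((J⁻¹ : Uˣ) : U) * (i2 (J : U) * x) = x := by
    intro x; rw [← mul_assoc, ← map_mul, Units.inv_mul, map_one, one_mul]
  have hTexp' : ∀ x : U2, Exp * (i1 ((T⁻¹ : Uˣ) : U) * (i2 ((T⁻¹ : Uˣ) : U) * x))
      = i1 ((T⁻¹ : Uˣ) : U) * (i2 ((T⁻¹ : Uˣ) : U) * (Exp * x)) := by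
    intro x
    simp only [← mul_assoc]
    rw [hTexp]
    simp only [mul_assoc]
  rw [hR]
  simp only [mul_inv_rev, inv_inv, Units.val_mul, map_mul, hΔJ, mul_assoc]
  -- move Δ Qh⁻¹ to the end on the RHS
  rw [hΔQinvcent (i1 (J : U) * (i2 (J : U) * (Exp * Δ (T : U))))]
  simp only [mul_assoc]
  -- move i1 J left across the i2 factors on the RHS
  rw [w21, w21, w21]
  -- cancel J⁻¹ with J on each leg
  rw [cQ1 (J : U), can1, cQ2 (J : U), can2]
  -- normalize LHS: move Exp right past T⁻¹ ⊗ T⁻¹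
  rw [hTexp']
  -- reorder Qh factors
  rw [w21 ((T⁻¹ : Uˣ) : U) (Qh : U), ← cQ1 ((T⁻¹ : Uˣ) : U), ← cQ2 ((T⁻¹ : Uˣ) : U)]
end

section
/- For the n-fold tensor power of the defining crystal B(□) of sl₂ (the 2-element crystal), the crystal commutor σ gives an action of the 3-fruit cactus group J₃ on B(□)^{⊗3}: the generators r_{[1,2]}, r_{[2,3]}, r_{[1,3]} defined via the commutor satisfy r_{[1,2]}² = r_{[2,3]}² = r_{[1,3]}² = Id and r_{[1,3]} r_{[1,2]} = r_{[2,3]} r_{[1,3]}. -/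
/-- The combinatorial data of a (finite, seminormal) crystal: raising and lowering operators,
string lengths `ε, φ`, and the weight. -/
structure Cr (X : Type) where
  e : X → Option X
  f : X → Option X
  eps : X → ℕ
  phi : X → ℕ
  wt : X → ℤ

/-- The defining (2-element) `sl₂`-crystal `B(□)`: `b₊ = true`, `b₋ = false`,
`f(b₊) = b₋`, `wt(b₊) = 1`, `wt(b₋) = -1`. -/
def B1 : Cr Bool where
  e b := if b then none else some true
  f b := if b then some false else none
  eps b := if b then 0 else 1
  phi b := if b then 1 else 0
  wt b := if b then 1 else -1

/-- The standard tensor product rule for crystals: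
`e(a⊗b) = e(a)⊗b` if `φ(a) ≥ ε(b)`, else `a⊗e(b)`, and
`f(a⊗b) = f(a)⊗b` if `φ(a) > ε(b)`, else `a⊗f(b)`. -/
def tensorCr {X Y : Type} (cx : Cr X) (cy : Cr Y) : Cr (X × Y) where
  e p := if cy.eps p.2 ≤ cx.phi p.1
    then (cx.e p.1).map (fun a => (a, p.2))
    else (cy.e p.2).map (fun b => (p.1, b))
  f p := if cy.eps p.2 < cx.phi p.1
    then (cx.f p.1).map (fun a => (a, p.2))
    else (cy.f p.2).map (fun b => (p.1, b))
  eps p := cx.eps p.1 + (cy.eps p.2 - cx.phi p.1)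
  phi p := cy.phi p.2 + (cx.phi p.1 - cy.eps p.2)
  wt p := cx.wt p.1 + cy.wt p.2

/-- `ξ` is the Schützenberger involution of the `sl₂`-crystal `(X, c)` (for `sl₂`, `θ = id`
and `w₀ = -1` on weights): it interchanges `e` and `f`, negates weights, and is an
involution. -/
def IsSchutz {X : Type} (c : Cr X) (ξ : X ≃ X) : Prop :=
  (∀ x, (c.e x).map ξ = c.f (ξ x)) ∧ (∀ x, (c.f x).map ξ = c.e (ξ x)) ∧
    (∀ x, c.wt (ξ x) = - c.wt x) ∧ (∀ x, ξ (ξ x) = x)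

/-- For the triple tensor power of the defining `sl₂`-crystal `B(□)`, the
crystal commutor `σ_{A,B}(a⊗b) = ξ(ξ(b)⊗ξ(a))` gives an action of the 3-fruit cactus group
`J₃`: the generators `r_{[1,2]} = σ⊗Id`, `r_{[2,3]} = Id⊗σ` and `r_{[1,3]}` (the recursively
defined commutor-reversal of all three factors, `σ_{A,B⊗C} ∘ (Id ⊗ r_{[2,3]})`) satisfy
`r_{[1,2]}² = r_{[2,3]}² = r_{[1,3]}² = Id` and `r_{[1,3]} r_{[1,2]} = r_{[2,3]} r_{[1,3]}`. -/
theorem stmt_17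
    (ξ1 : Bool ≃ Bool) (ξ2 : Bool × Bool ≃ Bool × Bool)
    (ξ3L : (Bool × Bool) × Bool ≃ (Bool × Bool) × Bool)
    (h1 : IsSchutz B1 ξ1)
    (h2 : IsSchutz (tensorCr B1 B1) ξ2)
    (h3 : IsSchutz (tensorCr (tensorCr B1 B1) B1) ξ3L) :
    let σ2 : Bool × Bool → Bool × Bool := fun p => ξ2 (ξ1 p.2, ξ1 p.1)
    let σ123 : Bool × (Bool × Bool) → (Bool × Bool) × Bool :=
      fun p => ξ3L (ξ2 p.2, ξ1 p.1)
    let r12 : Bool × Bool × Bool → Bool × Bool × Bool :=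
      fun t => ((σ2 (t.1, t.2.1)).1, (σ2 (t.1, t.2.1)).2, t.2.2)
    let r23 : Bool × Bool × Bool → Bool × Bool × Bool := fun t => (t.1, σ2 t.2)
    let r13 : Bool × Bool × Bool → Bool × Bool × Bool :=
      fun t => Equiv.prodAssoc Bool Bool Bool (σ123 (t.1, σ2 t.2))
    (∀ t, r12 (r12 t) = t) ∧ (∀ t, r23 (r23 t) = t) ∧ (∀ t, r13 (r13 t) = t) ∧
      (∀ t, r13 (r12 t) = r23 (r13 t)) := by
  obtain ⟨h1e, h1f, h1w, h1i⟩ := h1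
  obtain ⟨h2e, h2f, h2w, h2i⟩ := h2
  obtain ⟨h3e, h3f, h3w, h3i⟩ := h3
  -- pin down ξ1
  have e1t : ξ1 true = false := by
    have h := h1w true
    exact (by decide : ∀ y, B1.wt y = -(B1.wt true) → y = false) _ h
  have e1f : ξ1 false = true := by
    have h := h1w false
    exact (by decide : ∀ y, B1.wt y = -(B1.wt false) → y = true) _ h
  -- pin down ξ2
  have e2a : ξ2 (true, true) = (false, false) := by
    have h := h2w (true, true)
    exact (by decide : ∀ y, (tensorCr B1 B1).wt y = -((tensorCr B1 B1).wt (true, true)) →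
      y = (false, false)) _ h
  have e2b : ξ2 (false, false) = (true, true) := by
    have h := h2w (false, false)
    exact (by decide : ∀ y, (tensorCr B1 B1).wt y = -((tensorCr B1 B1).wt (false, false)) →
      y = (true, true)) _ h
  have e2c : ξ2 (false, true) = (false, true) := by
    have h := h2e (false, true)
    rw [show (tensorCr B1 B1).e (false, true) = some (true, true) from rfl,
      Option.map_some, e2a] at h
    exact (by decide : ∀ y, (tensorCr B1 B1).f y = some (false, false) →
      y = (false, true)) _ h.symm
  have e2d : ξ2 (true, false) = (true, false) := by
    have h := h2e (true, false)
    rw [show (tensorCr B1 B1).e (true, false) = none from rfl] at h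
    have hw := h2w (true, false)
    exact (by decide : ∀ y, (tensorCr B1 B1).wt y = -((tensorCr B1 B1).wt (true, false)) →
      (tensorCr B1 B1).f y = none → y = (true, false)) _ hw h.symm
  -- pin down ξ3L (6 forced values)
  have v1 : ξ3L ((true, true), true) = ((false, false), false) := by
    have h := h3w ((true, true), true)
    exact (by decide : ∀ y, (tensorCr (tensorCr B1 B1) B1).wt y =
      -((tensorCr (tensorCr B1 B1) B1).wt ((true, true), true)) →
      y = ((false, false), false)) _ h
  have v2 : ξ3L ((false, false), false) = ((true, true), true) := by
    rw [← v1, h3i]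
  have v3 : ξ3L ((false, true), true) = ((false, false), true) := by
    have h := h3e ((false, true), true)
    rw [show (tensorCr (tensorCr B1 B1) B1).e ((false, true), true) =
      some ((true, true), true) from rfl, Option.map_some, v1] at h
    exact (by decide : ∀ y, (tensorCr (tensorCr B1 B1) B1).f y = some ((false, false), false) →
      y = ((false, false), true)) _ h.symm
  have v4 : ξ3L ((false, false), true) = ((false, true), true) := by
    rw [← v3, h3i]
  have hinj : ∀ a b, ξ3L a = ξ3L b → a = b := fun a b h => by
    rw [← h3i a, h, h3i]
  have hcase : ξ3L ((true, true), false) = ((true, false), false) ∨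
      ξ3L ((true, true), false) = ((false, true), false) := by
    have h := h3e ((true, true), false)
    rw [show (tensorCr (tensorCr B1 B1) B1).e ((true, true), false) = none from rfl] at h
    have hw := h3w ((true, true), false)
    exact (by decide : ∀ y, (tensorCr (tensorCr B1 B1) B1).wt y =
      -((tensorCr (tensorCr B1 B1) B1).wt ((true, true), false)) →
      (tensorCr (tensorCr B1 B1) B1).f y = none →
      y = ((true, false), false) ∨ y = ((false, true), false)) _ hw h.symm
  have hcase2 : ξ3L ((true, false), true) = ((true, false), false) ∨
      ξ3L ((true, false), true) = ((false, true), false) := by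
    have h := h3e ((true, false), true)
    rw [show (tensorCr (tensorCr B1 B1) B1).e ((true, false), true) = none from rfl] at h
    have hw := h3w ((true, false), true)
    exact (by decide : ∀ y, (tensorCr (tensorCr B1 B1) B1).wt y =
      -((tensorCr (tensorCr B1 B1) B1).wt ((true, false), true)) →
      (tensorCr (tensorCr B1 B1) B1).f y = none →
      y = ((true, false), false) ∨ y = ((false, true), false)) _ hw h.symm
  intro σ2 σ123 r12 r23 r13
  rcases hcase with hA | hB
  · -- case A : ξ3L ((t,t),f) = ((t,f),f)
    have w1 : ξ3L ((true, false), false) = ((true, true), false) := by rw [← hA, h3i]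
    have w2 : ξ3L ((true, false), true) = ((false, true), false) := by
      rcases hcase2 with h | h
      · exact absurd (hinj _ _ (h.trans hA.symm)) (by decide)
      · exact h
    have w3 : ξ3L ((false, true), false) = ((true, false), true) := by rw [← w2, h3i]
    refine ⟨fun t => ?_, fun t => ?_, fun t => ?_, fun t => ?_⟩ <;>
      obtain ⟨a, b, c⟩ := t <;> cases a <;> cases b <;> cases c <;>
      simp only [r12, r23, r13, σ2, σ123, e1t, e1f, e2a, e2b, e2c, e2d,
        v1, v2, v3, v4, hA, w1, w2, w3, Equiv.prodAssoc_apply]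
  · -- case B : ξ3L ((t,t),f) = ((f,t),f)
    have w1 : ξ3L ((false, true), false) = ((true, true), false) := by rw [← hB, h3i]
    have w2 : ξ3L ((true, false), true) = ((true, false), false) := by
      rcases hcase2 with h | h
      · exact h
      · exact absurd (hinj _ _ (h.trans hB.symm)) (by decide)
    have w3 : ξ3L ((true, false), false) = ((true, false), true) := by rw [← w2, h3i]
    refine ⟨fun t => ?_, fun t => ?_, fun t => ?_, fun t => ?_⟩ <;>
      obtain ⟨a, b, c⟩ := t <;> cases a <;> cases b <;> cases c <;>
      simp only [r12, r23, r13, σ2, σ123, e1t, e1f, e2a, e2b, e2c, e2d,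
        v1, v2, v3, v4, hB, w1, w2, w3, Equiv.prodAssoc_apply]
end
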